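/- Transitivity of determination: in a finite directed graph with the determination relation A → B defined via the edge-removal procedure, if A → B and (A ∪ B) → C then A → C. Equivalently, φ(A ∪ B) ⊆ φ(A) whenever B ⊆ φ(A), so φ(φ(A)) = φ(A). -/

import Mathlib

/-!
`φ(A)` is the least set containing `A` and closed under deleting a node all of whose
in-neighbours outside `A` are already deleted. If `B ⊆ φ(A)`, then `φ(A)` is itself closed
under the rule for `A ∪ B`: an in-neighbour outside `A` that lies in `B` is deleted anyway.
Hence `φ(A ∪ B) ⊆ φ(A)`, and idempotence follows from monotonicity with `B = φ(A)`.
-/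

/-- Nodes deleted by the edge-removal procedure started from `A`. -/
inductive DetDeleted {V : Type*} (E : V → V → Prop) (A : Set V) : V → Prop
  | mem (v : V) : v ∈ A → DetDeleted E A v
  | step (v : V) : (∀ u, E u v → u ∉ A → DetDeleted E A u) → DetDeleted E A v

def phi {V : Type*} (E : V → V → Prop) (A : Set V) : Set V :=
  {v | DetDeleted E A v}

section

variable {V : Type*} {E : V → V → Prop}

theorem subset_phi (A : Set V) : A ⊆ phi E A :=
  fun v hv => DetDeleted.mem v hv

theorem phi_mono {A A' : Set V} (h : A ⊆ A') : phi E A ⊆ phi E A' := by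
  intro v hv
  induction hv with
  | mem v hvA => exact DetDeleted.mem v (h hvA)
  | step v _ ih => exact DetDeleted.step v fun u huv huA' => ih u huv (fun huA => huA' (h huA))

theorem phi_union_subset {A B : Set V} (hB : B ⊆ phi E A) : phi E (A ∪ B) ⊆ phi E A := by
  intro v hv
  induction hv with
  | mem v hvAB => exact hvAB.elim (DetDeleted.mem v) (fun hvB => hB hvB)
  | step v _ ih =>
    refine DetDeleted.step v fun u huv huA => ?_
    by_cases huB : u ∈ B
    · exact hB huB
    · exact ih u huv (by simp [huA, huB])

theorem phi_phi (A : Set V) : phi E (phi E A) = phi E A := by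
  refine Set.Subset.antisymm ?_ (phi_mono (subset_phi A))
  calc phi E (phi E A) ⊆ phi E (A ∪ phi E A) := phi_mono Set.subset_union_right
    _ ⊆ phi E A := phi_union_subset subset_rfl

end

theorem determination_transitive_general {V : Type*}
    (E : V → V → Prop) :
    (∀ A B C : Set V, B ⊆ phi E A → C ⊆ phi E (A ∪ B) → C ⊆ phi E A) ∧
    (∀ A B : Set V, B ⊆ phi E A → phi E (A ∪ B) ⊆ phi E A) ∧
    (∀ A : Set V, phi E (phi E A) = phi E A) :=
  ⟨fun _ _ _ hB hC => hC.trans (phi_union_subset hB), fun _ _ => phi_union_subset, phi_phi⟩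

/-- Transitivity of determination: if `A → B` and `A ∪ B → C` then `A → C`;
equivalently `φ(A ∪ B) ⊆ φ(A)` whenever `B ⊆ φ(A)`, so `φ(φ(A)) = φ(A)`. -/
theorem determination_transitive {V : Type*} [Fintype V]
    (E : V → V → Prop) :
    (∀ A B C : Set V, B ⊆ phi E A → C ⊆ phi E (A ∪ B) → C ⊆ phi E A) ∧
    (∀ A B : Set V, B ⊆ phi E A → phi E (A ∪ B) ⊆ phi E A) ∧
    (∀ A : Set V, phi E (phi E A) = phi E A) :=
  determination_transitive_general E
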